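/- In the setting of the potential-theoretic ensemble: let K be compact, regular, with connected complement, w_K = e^{−g_K}, and let Ω_{N,s,β} be the probability density on ℂ^N proportional to exp{−βsΣg_K(z_n)}∏_{m<n}|z_n−z_m|^β, with β(s−N+1) > 2+c_0 and N^{−2} log Z_{N,s,β} → −(β/2)I[ω_K]. For ε > 0 let U_{N,ε} := {(z_1,…,z_N) : ∏_{m<n}|z_n−z_m| ∏_n w_K(z_n)^{N−1} ≥ exp{−(I[ω_K]+ε)N(N−1)/2}}. Then ∫_{ℂ^N∖U_{N,ε}} Ω_{N,s,β} dA^{⊗N} ≤ exp{−β(ε + o(1)) N(N−1)/2} as N → ∞. -/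

import Mathlib

/-!
Off `U_{N,ε}` the Vandermonde product is below `e^{-(I+ε)N(N-1)/2} ∏ e^{(N-1) g(z_n)}`. Raising
this to the power `β` and using `β(s-N+1) ≥ 2+c₀` together with `g ≥ 0`, the unnormalised density
there is at most `e^{-β(I+ε)N(N-1)/2} ∏ w(z_n)^{2+c₀}`, where `w = e^{-g}`. Since `g` grows like
`log |z|`, `w^{2+c₀}` decays like `|z|^{-2-c₀}` and is integrable on `ℂ ≅ ℝ²`, so the integral
is at most `Z⁻¹ e^{-β(I+ε)N(N-1)/2} A^N` with `A = ∫ w^{2+c₀}`. Both `N⁻² log Z + (β/2) I` and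
`N log A / (N(N-1))` tend to zero, which is the `o(1)` in the exponent.
-/

open MeasureTheory Filter Set
open scoped Topology

open Real Module

section Integrability

variable {E : Type*} [NormedAddCommGroup E] {g : E → ℝ} {C R : ℝ}

lemma exists_exp_neg_le_mul_inv_one_add_norm (hg_nonneg : ∀ z, 0 ≤ g z)
    (hgrow : ∀ z, R ≤ ‖z‖ → log ‖z‖ - C ≤ g z) :
    ∃ c, ∀ z, exp (-g z) ≤ c * (1 + ‖z‖)⁻¹ := by
  refine ⟨max (1 + max R 1) (2 * exp C), fun z => ?_⟩
  rw [← div_eq_mul_inv, le_div_iff₀ (by positivity)]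
  rcases le_or_gt ‖z‖ (max R 1) with hz | hz
  · calc exp (-g z) * (1 + ‖z‖) ≤ 1 * (1 + max R 1) := by
          gcongr
          · exact exp_le_one_iff.mpr (neg_nonpos.mpr (hg_nonneg z))
      _ ≤ _ := by rw [one_mul]; exact le_max_left _ _
  · have hz1 : 1 < ‖z‖ := (le_max_right R 1).trans_lt hz
    have hzpos : 0 < ‖z‖ := by linarith
    have hexp : exp (-g z) ≤ exp C / ‖z‖ := by
      rw [le_div_iff₀ hzpos, ← exp_log hzpos, ← exp_add, exp_le_exp]
      linarith [hgrow z ((le_max_left R 1).trans hz.le)]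
    calc exp (-g z) * (1 + ‖z‖) ≤ exp C / ‖z‖ * (2 * ‖z‖) := by gcongr; linarith
      _ = 2 * exp C := by field_simp
      _ ≤ _ := le_max_right _ _

variable [NormedSpace ℝ E] [FiniteDimensional ℝ E] [MeasurableSpace E] [BorelSpace E]
  {μ : Measure E} [μ.IsAddHaarMeasure]

lemma integrable_exp_neg_mul_of_log_sub_le (hg : Measurable g) (hg_nonneg : ∀ z, 0 ≤ g z)
    (hgrow : ∀ z, R ≤ ‖z‖ → log ‖z‖ - C ≤ g z) {r : ℝ} (hr : finrank ℝ E < r) :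
    Integrable (fun z => exp (-r * g z)) μ := by
  obtain ⟨c, hc⟩ := exists_exp_neg_le_mul_inv_one_add_norm hg_nonneg hgrow
  refine ((integrable_one_add_norm hr).const_mul (c ^ r)).mono' (by fun_prop)
    (Eventually.of_forall fun z => ?_)
  have hc0 : 0 ≤ c :=
    (mul_nonneg_iff_of_pos_right (by positivity)).mp ((exp_pos _).le.trans (hc z))
  have hr0 : 0 ≤ r := (Nat.cast_nonneg _).trans hr.le
  rw [norm_of_nonneg (exp_pos _).le, neg_mul, ← mul_neg, mul_comm, exp_mul]
  calc exp (-g z) ^ r ≤ (c * (1 + ‖z‖)⁻¹) ^ r := rpow_le_rpow (exp_pos _).le (hc z) hr0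
    _ = c ^ r * (1 + ‖z‖) ^ (-r) := by
      rw [mul_rpow hc0 (by positivity), inv_rpow (by positivity), rpow_neg (by positivity)]
end Integrability

lemma exp_neg_mul_mul_rpow_le {P T a β s k r : ℝ} (hP : 0 ≤ P) (hT : 0 ≤ T) (hβ : 0 ≤ β)
    (hr : r ≤ β * (s - k)) (h : P * exp (-(k * T)) ≤ exp a) :
    exp (-β * s * T) * P ^ β ≤ exp (β * a) * exp (-r * T) := by
  have hP' : P ≤ exp (a + k * T) := by
    rwa [exp_add, ← div_le_iff₀ (exp_pos _), div_eq_mul_inv, ← exp_neg]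
  calc exp (-β * s * T) * P ^ β ≤ exp (-β * s * T) * exp (a + k * T) ^ β := by gcongr
    _ = exp (β * a - β * (s - k) * T) := by rw [← exp_mul, ← exp_add]; ring_nf
    _ ≤ exp (β * a) * exp (-r * T) := by
      rw [← exp_add, exp_le_exp]; nlinarith

lemma prod_exp_neg_pow {ι : Type*} (t : Finset ι) (f : ι → ℝ) (m : ℕ) :
    ∏ i ∈ t, exp (-f i) ^ m = exp (-(m * ∑ i ∈ t, f i)) := by
  simp [← exp_nat_mul, ← exp_sum, Finset.mul_sum]

lemma setIntegral_lowEnergy_le {N : ℕ} (hN : 1 ≤ N) {g : ℂ → ℝ} (hg_nonneg : ∀ z, 0 ≤ g z)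
    {β s r a : ℝ} (hβ : 0 ≤ β) (hr : r ≤ β * (s - N + 1))
    (hint : Integrable (fun z => exp (-r * g z))) :
    ∫ z in {z : Fin N → ℂ | ¬ (exp a ≤
          (∏ p ∈ Finset.univ.filter (fun p : Fin N × Fin N => p.1 < p.2), ‖z p.2 - z p.1‖) *
            ∏ n : Fin N, exp (-g (z n)) ^ (N - 1))},
        exp (-β * s * ∑ n : Fin N, g (z n)) *
          ∏ p ∈ Finset.univ.filter (fun p : Fin N × Fin N => p.1 < p.2), ‖z p.2 - z p.1‖ ^ β
        ∂(Measure.pi fun _ : Fin N => (volume : Measure ℂ))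
      ≤ exp (β * a) * (∫ z, exp (-r * g z)) ^ N := by
  have hbound : Integrable (fun z : Fin N → ℂ => exp (β * a) * ∏ n, exp (-r * g (z n)))
      (Measure.pi fun _ => volume) :=
    (Integrable.fintype_prod fun _ => hint).const_mul _
  calc _ ≤ ∫ z in _, exp (β * a) * ∏ n : Fin N, exp (-r * g (z n))
          ∂(Measure.pi fun _ : Fin N => (volume : Measure ℂ)) := by
        refine setIntegral_mono_of_nonneg (fun z _ => by positivity) (fun z hz => ?_)
          hbound.integrableOn
        rw [Real.finsetProd_rpow _ _ (fun _ _ => norm_nonneg _), ← exp_sum, ← Finset.mul_sum]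
        refine exp_neg_mul_mul_rpow_le (k := (N - 1 : ℕ)) (by positivity)
          (Finset.sum_nonneg fun n _ => hg_nonneg _) hβ
          (by rw [Nat.cast_sub hN, Nat.cast_one]; linarith) ?_
        rw [← prod_exp_neg_pow]
        exact (not_le.mp hz).le
    _ ≤ ∫ z, exp (β * a) * ∏ n : Fin N, exp (-r * g (z n))
          ∂(Measure.pi fun _ : Fin N => (volume : Measure ℂ)) :=
        setIntegral_le_integral hbound (Eventually.of_forall fun z => by positivity)
    _ = exp (β * a) * (∫ z, exp (-r * g z)) ^ N := by
      rw [integral_const_mul, integral_fintype_prod_eq_pow (fun z => exp (-r * g z)),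
        Fintype.card_fin]

lemma exp_le_prod_of_le_one {N : ℕ} (hN : N ≤ 1) (g : ℂ → ℝ) (c : ℝ) (z : Fin N → ℂ) :
    exp (c * ((N : ℝ) * ((N : ℝ) - 1)) / 2) ≤
      (∏ p ∈ Finset.univ.filter (fun p : Fin N × Fin N => p.1 < p.2), ‖z p.2 - z p.1‖) *
        ∏ n : Fin N, exp (-g (z n)) ^ (N - 1) := by
  interval_cases N
  · simp
  · simp [Subsingleton.elim (α := Fin 1) _ 0]

lemma exists_tendsto_zero_inv_mul_exp_mul_pow_eq {β IK A : ℝ} (hβ : β ≠ 0) (hA : 0 < A)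
    {Z : ℕ → ℝ} (hlim : Tendsto (fun N : ℕ => ((N : ℝ) ^ 2)⁻¹ * log (Z N)) atTop
      (𝓝 (-(β / 2) * IK))) (ε : ℝ) :
    ∃ e : ℕ → ℝ, Tendsto e atTop (𝓝 0) ∧ ∀ N : ℕ, 2 ≤ N → 0 < Z N →
      (Z N)⁻¹ * (exp (β * (-(IK + ε) * ((N : ℝ) * ((N : ℝ) - 1)) / 2)) * A ^ N) =
        exp (-β * (ε + e N) * ((N : ℝ) * ((N : ℝ) - 1)) / 2) := by
  have hinv : Tendsto (fun N : ℕ => ((N : ℝ) - 1)⁻¹) atTop (𝓝 0) :=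
    tendsto_inv_atTop_zero.comp
      (tendsto_atTop_add_const_right _ (-1) tendsto_natCast_atTop_atTop)
  refine ⟨fun N => 2 / β * (1 + ((N : ℝ) - 1)⁻¹) * (((N : ℝ) ^ 2)⁻¹ * log (Z N)) + IK
      - 2 * log A / β * ((N : ℝ) - 1)⁻¹, ?_, fun N hN hZ => ?_⟩
  · convert ((tendsto_const_nhds.mul (tendsto_const_nhds.add hinv)).mul hlim).add_const IK
      |>.sub (tendsto_const_nhds.mul hinv) using 2
    field_simp
    ring
  · have hN1 : (N : ℝ) - 1 ≠ 0 := by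
      have : (2 : ℝ) ≤ N := by exact_mod_cast hN
      linarith
    rw [show (Z N)⁻¹ = exp (-log (Z N)) by rw [exp_neg, exp_log hZ],
      show A ^ N = exp (N * log A) by rw [exp_nat_mul, exp_log hA], ← exp_add, ← exp_add]
    congr 1
    field_simp
    ring

theorem stmt15_general
    (g : ℂ → ℝ) (hg_cont : Continuous g) (hg_nonneg : ∀ z, 0 ≤ g z)
    (C R : ℝ) (hgrow : ∀ z : ℂ, R ≤ ‖z‖ →
      |g z - Real.log ‖z‖| ≤ C)
    (β c₀ : ℝ) (hβ : 0 < β) (hc₀ : 0 < c₀)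
    (s : ℕ → ℝ) (hs : ∀ N : ℕ, 2 + c₀ < β * (s N - (N : ℝ) + 1))
    (Z : ℕ → ℝ)
    (hZ : ∀ N : ℕ, Z N = ∫ z : Fin N → ℂ,
        Real.exp (-β * s N * ∑ n : Fin N, g (z n)) *
          ∏ p ∈ Finset.univ.filter (fun p : Fin N × Fin N => p.1 < p.2),
            ‖z p.2 - z p.1‖ ^ β
        ∂(Measure.pi fun _ : Fin N => (volume : Measure ℂ)))
    (IK : ℝ)
    (hlim : Tendsto (fun N : ℕ => ((N : ℝ) ^ 2)⁻¹ * Real.log (Z N)) atTop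
      (nhds (-(β / 2) * IK)))
    (ε : ℝ) :
    ∃ e : ℕ → ℝ, Tendsto e atTop (nhds 0) ∧ ∀ N : ℕ,
      (∫ z in {z : Fin N → ℂ |
          ¬ (Real.exp (-(IK + ε) * ((N : ℝ) * ((N : ℝ) - 1)) / 2) ≤
              (∏ p ∈ Finset.univ.filter (fun p : Fin N × Fin N => p.1 < p.2),
                ‖z p.2 - z p.1‖) *
                ∏ n : Fin N, Real.exp (-g (z n)) ^ (N - 1))},
        (Z N)⁻¹ * (Real.exp (-β * s N * ∑ n : Fin N, g (z n)) *
          ∏ p ∈ Finset.univ.filter (fun p : Fin N × Fin N => p.1 < p.2),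
            ‖z p.2 - z p.1‖ ^ β)
        ∂(Measure.pi fun _ : Fin N => (volume : Measure ℂ)))
      ≤ Real.exp (-β * (ε + e N) * ((N : ℝ) * ((N : ℝ) - 1)) / 2) := by
  have hint : Integrable (fun z : ℂ => exp (-(2 + c₀) * g z)) :=
    integrable_exp_neg_mul_of_log_sub_le (C := C) hg_cont.measurable hg_nonneg
      (fun z hz => by linarith [(abs_le.mp (hgrow z hz)).1])
      (by rw [Complex.finrank_real_complex]; push_cast; linarith)
  obtain ⟨e, he, heq⟩ :=
    exists_tendsto_zero_inv_mul_exp_mul_pow_eq hβ.ne' (integral_exp_pos hint) hlim ε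
  refine ⟨e, he, fun N => ?_⟩
  rcases le_or_gt N 1 with hN | hN
  · refine (setIntegral_eq_zero_of_forall_eq_zero fun z hz => ?_).trans_le (by positivity)
    exact absurd (exp_le_prod_of_le_one hN g _ z) hz
  have hZ_nonneg : 0 ≤ Z N := hZ N ▸ integral_nonneg fun z => by positivity
  rcases hZ_nonneg.eq_or_lt with hZ0 | hZpos
  · simp only [← hZ0, inv_zero, zero_mul, integral_zero]
    positivity
  rw [integral_const_mul, ← heq N hN hZpos]
  gcongr
  exact setIntegral_lowEnergy_le hN.le hg_nonneg hβ.le (by linarith [hs N]) hint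

/-- Exponential smallness of the low-"energy" event.  With K compact and regular,
g_K the Green function (continuous, ≥ 0, vanishing on K, logarithmic at ∞),
w_K = e^{−g_K}, β(s−N+1) > 2+c₀, Z_{N,s,β} the partition function and
N⁻² log Z_{N,s,β} → −(β/2) I[ω_K], set
`U_{N,ε} = {z : ∏_{m<n}|z_n−z_m| ∏_n w_K(z_n)^{N−1} ≥ e^{−(I[ω_K]+ε)N(N−1)/2}}`.
Then `∫_{ℂ^N ∖ U_{N,ε}} Ω_{N,s,β} dA^{⊗N} ≤ e^{−β(ε+o(1))N(N−1)/2}` as N → ∞. -/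
theorem stmt15 (K : Set ℂ) (hK : IsCompact K)
    (g : ℂ → ℝ) (hg_cont : Continuous g) (hg_nonneg : ∀ z, 0 ≤ g z)
    (hg_zero : ∀ z ∈ K, g z = 0)
    (C R : ℝ) (hgrow : ∀ z : ℂ, R ≤ ‖z‖ →
      |g z - Real.log ‖z‖| ≤ C)
    (β c₀ : ℝ) (hβ : 0 < β) (hc₀ : 0 < c₀)
    (s : ℕ → ℝ) (hs : ∀ N : ℕ, 2 + c₀ < β * (s N - (N : ℝ) + 1))
    (Z : ℕ → ℝ)
    (hZ : ∀ N : ℕ, Z N = ∫ z : Fin N → ℂ,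
        Real.exp (-β * s N * ∑ n : Fin N, g (z n)) *
          ∏ p ∈ Finset.univ.filter (fun p : Fin N × Fin N => p.1 < p.2),
            ‖z p.2 - z p.1‖ ^ β
        ∂(Measure.pi fun _ : Fin N => (volume : Measure ℂ)))
    (IK : ℝ)
    (hlim : Tendsto (fun N : ℕ => ((N : ℝ) ^ 2)⁻¹ * Real.log (Z N)) atTop
      (nhds (-(β / 2) * IK)))
    (ε : ℝ) (hε : 0 < ε) :
    ∃ e : ℕ → ℝ, Tendsto e atTop (nhds 0) ∧ ∀ N : ℕ,
      (∫ z in {z : Fin N → ℂ |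
          ¬ (Real.exp (-(IK + ε) * ((N : ℝ) * ((N : ℝ) - 1)) / 2) ≤
              (∏ p ∈ Finset.univ.filter (fun p : Fin N × Fin N => p.1 < p.2),
                ‖z p.2 - z p.1‖) *
                ∏ n : Fin N, Real.exp (-g (z n)) ^ (N - 1))},
        (Z N)⁻¹ * (Real.exp (-β * s N * ∑ n : Fin N, g (z n)) *
          ∏ p ∈ Finset.univ.filter (fun p : Fin N × Fin N => p.1 < p.2),
            ‖z p.2 - z p.1‖ ^ β)
        ∂(Measure.pi fun _ : Fin N => (volume : Measure ℂ)))
      ≤ Real.exp (-β * (ε + e N) * ((N : ℝ) * ((N : ℝ) - 1)) / 2) :=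
  stmt15_general g hg_cont hg_nonneg C R hgrow β c₀ hβ hc₀ s hs Z hZ IK hlim ε
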